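/- arXiv:1601.03189 — 3 statements merged into one kernel-verified Lean document; each statement's English description precedes it below -/
import Mathlib

section
/- If D^L is a left derivation and D^R a right derivation of a Leibniz algebra g, then their commutator [D^L, D^R] = D^L∘D^R − D^R∘D^L is a right derivation of g. -/
/-!
Expanding `DL (DR (B x y))` and `DR (DL (B x y))` with the two derivation rules, the mixed terms
`B (DL x) (DR y)` and `B (DL y) (DR x)` occur in both expansions and cancel in the difference,
which leaves exactly `B x (⁅DL, DR⁆ y) - B y (⁅DL, DR⁆ x)`.
-/

namespace LinearMap

variable {R M : Type*} [CommSemiring R] [AddCommGroup M] [Module R M] (B : M →ₗ[R] M →ₗ[R] M)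

def IsLeftDerivation (D : Module.End R M) : Prop :=
  ∀ x y : M, D (B x y) = B (D x) y + B x (D y)

def IsRightDerivation (D : Module.End R M) : Prop :=
  ∀ x y : M, D (B x y) = B x (D y) - B y (D x)

variable {B} {DL DR : Module.End R M}

theorem IsLeftDerivation.apply_apply_of_isRightDerivation (hDL : IsLeftDerivation B DL)
    (hDR : IsRightDerivation B DR) (x y : M) :
    DL (DR (B x y)) = B (DL x) (DR y) + B x (DL (DR y)) - (B (DL y) (DR x) + B y (DL (DR x))) := by
  rw [hDR, map_sub, hDL, hDL]

theorem IsRightDerivation.apply_apply_of_isLeftDerivation (hDR : IsRightDerivation B DR)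
    (hDL : IsLeftDerivation B DL) (x y : M) :
    DR (DL (B x y)) = B (DL x) (DR y) - B y (DR (DL x)) + (B x (DR (DL y)) - B (DL y) (DR x)) := by
  rw [hDL, map_add, hDR, hDR]

theorem IsRightDerivation.lie_of_isLeftDerivation (hDL : IsLeftDerivation B DL)
    (hDR : IsRightDerivation B DR) : IsRightDerivation B ⁅DL, DR⁆ := by
  intro x y
  simp only [Ring.lie_def, sub_apply, Module.End.mul_apply, map_sub,
    hDL.apply_apply_of_isRightDerivation hDR, hDR.apply_apply_of_isLeftDerivation hDL]
  abel

end LinearMap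

theorem commutator_leftDer_rightDer_isRightDerivation_general
    {K : Type*} [Field K] {g : Type*} [AddCommGroup g] [Module K g]
    (B : g →ₗ[K] g →ₗ[K] g)
    (DL DR : Module.End K g)
    (hDL : ∀ x y : g, DL (B x y) = B (DL x) y + B x (DL y))
    (hDR : ∀ x y : g, DR (B x y) = B x (DR y) - B y (DR x)) :
    ∀ x y : g, ⁅DL, DR⁆ (B x y) = B x (⁅DL, DR⁆ y) - B y (⁅DL, DR⁆ x) :=
  LinearMap.IsRightDerivation.lie_of_isLeftDerivation hDL hDR

/-- If `DL` is a left derivation and `DR` a right derivation of a Leibniz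
algebra `g`, then the commutator `⁅DL,DR⁆ = DL∘DR - DR∘DL` is a right
derivation of `g`. -/
theorem commutator_leftDer_rightDer_isRightDerivation
    {K : Type*} [Field K] {g : Type*} [AddCommGroup g] [Module K g]
    (B : g →ₗ[K] g →ₗ[K] g)
    (hleib : ∀ x y z : g, B x (B y z) = B (B x y) z + B y (B x z))
    (DL DR : Module.End K g)
    (hDL : ∀ x y : g, DL (B x y) = B (DL x) y + B x (DL y))
    (hDR : ∀ x y : g, DR (B x y) = B x (DR y) - B y (DR x)) :
    ∀ x y : g, ⁅DL, DR⁆ (B x y) = B x (⁅DL, DR⁆ y) - B y (⁅DL, DR⁆ x) :=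
  commutator_leftDer_rightDer_isRightDerivation_general B DL DR hDL hDR
end

section
/- The space Der^L(g) ⊕ Der^R(g) equipped with the bracket [(D^L_1,D^R_1),(D^L_2,D^R_2)]_s = ([D^L_1,D^L_2], [D^L_1,D^R_2]) is a Leibniz algebra. -/
/-!
Expanding `⁅D, E⁆ (B x y)` with `D` a left derivation and `E` a left (resp. right) derivation,
the mixed terms, in which `D` and `E` hit different arguments of `B`, cancel, so `⁅D, E⁆` is
again a left (resp. right) derivation. The Leibniz identity of `[·,·]_s` is, in each component,
the Jacobi identity of the commutator in `End g`.
-/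

variable {K : Type*} [Field K] {g : Type*} [AddCommGroup g] [Module K g]

/-- Left derivation of the Leibniz algebra `(g, B)`. -/
def IsLeftDer (B : g →ₗ[K] g →ₗ[K] g) (D : Module.End K g) : Prop :=
  ∀ x y : g, D (B x y) = B (D x) y + B x (D y)

/-- Right derivation of the Leibniz algebra `(g, B)`. -/
def IsRightDer (B : g →ₗ[K] g →ₗ[K] g) (D : Module.End K g) : Prop :=
  ∀ x y : g, D (B x y) = B x (D y) - B y (D x)

/-- The semidirect bracket on `Der^L(g) ⊕ Der^R(g)`:
`[(D^L₁,D^R₁),(D^L₂,D^R₂)]_s = (⁅D^L₁,D^L₂⁆, ⁅D^L₁,D^R₂⁆)`. -/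
def sBracket (D E : Module.End K g × Module.End K g) :
    Module.End K g × Module.End K g :=
  (⁅D.1, E.1⁆, ⁅D.1, E.2⁆)

section Derivations

variable {B : g →ₗ[K] g →ₗ[K] g} {D E : Module.End K g}

theorem IsLeftDer.lie (hD : IsLeftDer B D) (hE : IsLeftDer B E) : IsLeftDer B ⁅D, E⁆ := by
  intro x y
  simp only [Ring.lie_def, LinearMap.sub_apply, Module.End.mul_apply, hD _, hE _, map_add, map_sub]
  abel

theorem IsRightDer.lie_of_isLeftDer (hD : IsLeftDer B D) (hE : IsRightDer B E) :
    IsRightDer B ⁅D, E⁆ := by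
  intro x y
  simp only [Ring.lie_def, LinearMap.sub_apply, Module.End.mul_apply, hD _, hE _, map_add, map_sub]
  abel

end Derivations

theorem sBracket_leibniz (D E F : Module.End K g × Module.End K g) :
    sBracket D (sBracket E F) = sBracket (sBracket D E) F + sBracket E (sBracket D F) :=
  Prod.ext (LieRing.ofAssociativeRing.leibniz_lie D.1 E.1 F.1)
    (LieRing.ofAssociativeRing.leibniz_lie D.1 E.1 F.2)

theorem semidirect_derL_derR_leibniz_general
    (B : g →ₗ[K] g →ₗ[K] g) :
    (∀ D E : Module.End K g × Module.End K g,
      IsLeftDer B D.1 → IsRightDer B D.2 → IsLeftDer B E.1 → IsRightDer B E.2 →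
      IsLeftDer B (sBracket D E).1 ∧ IsRightDer B (sBracket D E).2) ∧
    (∀ D E F : Module.End K g × Module.End K g,
      IsLeftDer B D.1 → IsRightDer B D.2 → IsLeftDer B E.1 → IsRightDer B E.2 →
      IsLeftDer B F.1 → IsRightDer B F.2 →
      sBracket D (sBracket E F) =
        sBracket (sBracket D E) F + sBracket E (sBracket D F)) :=
  ⟨fun _ _ hD₁ _ hE₁ hE₂ => ⟨hD₁.lie hE₁, hE₂.lie_of_isLeftDer hD₁⟩,
    fun D E F _ _ _ _ _ _ => sBracket_leibniz D E F⟩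

/-- `(Der^L(g) ⊕ Der^R(g), [·,·]_s)` is a Leibniz algebra: the bracket is
closed on pairs of (left, right) derivations and satisfies the left Leibniz
identity there. -/
theorem semidirect_derL_derR_leibniz
    (B : g →ₗ[K] g →ₗ[K] g)
    (hleib : ∀ x y z : g, B x (B y z) = B (B x y) z + B y (B x z)) :
    (∀ D E : Module.End K g × Module.End K g,
      IsLeftDer B D.1 → IsRightDer B D.2 → IsLeftDer B E.1 → IsRightDer B E.2 →
      IsLeftDer B (sBracket D E).1 ∧ IsRightDer B (sBracket D E).2) ∧
    (∀ D E F : Module.End K g × Module.End K g,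
      IsLeftDer B D.1 → IsRightDer B D.2 → IsLeftDer B E.1 → IsRightDer B E.2 →
      IsLeftDer B F.1 → IsRightDer B F.2 →
      sBracket D (sBracket E F) =
        sBracket (sBracket D E) F + sBracket E (sBracket D F)) :=
  semidirect_derL_derR_leibniz_general B
end

section
/- Given a non-abelian extension 0 → h → ĝ → g → 0 of Leibniz algebras, the equivalence class of the induced non-abelian 2-cocycle (l,r,ω) does not depend on the choice of splitting σ : g → ĝ: if σ₁, σ₂ are two splittings, then the 2-cocycles they induce are equivalent via φ(x) = σ₁(x) − σ₂(x). -/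
/-! Two splittings of `p` differ by a map `φ = σ₁ - σ₂` into `ker p`, and every identity in the
equivalence is then bilinearity of the bracket of `ĝ`, expanded at `σ₁ = σ₂ + φ`. -/

theorem LinearMap.map₂_sub_map₂_eq {R M N P : Type*} [CommSemiring R]
    [AddCommGroup M] [AddCommGroup N] [AddCommGroup P] [Module R M] [Module R N] [Module R P]
    (B : M →ₗ[R] N →ₗ[R] P) (a a' : M) (b b' : N) :
    B a' b' - B a b = B a (b' - b) + B (a' - a) b + B (a' - a) (b' - b) := by
  simp only [map_sub, LinearMap.sub_apply]
  abel

theorem cocycle_class_independent_of_splitting_general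
    {K : Type*} [Field K]
    {g : Type*} [AddCommGroup g] [Module K g]
    {G : Type*} [AddCommGroup G] [Module K G]
    (Bg : g →ₗ[K] g →ₗ[K] g)
    (BG : G →ₗ[K] G →ₗ[K] G)
    (p : G →ₗ[K] g)
    (σ₁ σ₂ : g →ₗ[K] G)
    (hσ₁ : ∀ x : g, p (σ₁ x) = x) (hσ₂ : ∀ x : g, p (σ₂ x) = x) :
    (∀ x : g, σ₁ x - σ₂ x ∈ LinearMap.ker p) ∧
    (∀ (x : g) (β : G), β ∈ LinearMap.ker p →
        BG (σ₁ x) β - BG (σ₂ x) β = BG (σ₁ x - σ₂ x) β) ∧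
    (∀ (x : g) (α : G), α ∈ LinearMap.ker p →
        BG α (σ₁ x) - BG α (σ₂ x) = BG α (σ₁ x - σ₂ x)) ∧
    (∀ x y : g,
        (BG (σ₁ x) (σ₁ y) - σ₁ (Bg x y)) - (BG (σ₂ x) (σ₂ y) - σ₂ (Bg x y)) =
          BG (σ₂ x) (σ₁ y - σ₂ y) + BG (σ₁ x - σ₂ x) (σ₂ y) +
            BG (σ₁ x - σ₂ x) (σ₁ y - σ₂ y) -
              (σ₁ (Bg x y) - σ₂ (Bg x y))) := by
  refine ⟨fun x => ?_, fun x β _ => ?_, fun x α _ => ?_, fun x y => ?_⟩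
  · exact LinearMap.sub_mem_ker_iff.mpr ((hσ₁ x).trans (hσ₂ x).symm)
  · exact (LinearMap.map_sub₂ BG _ _ β).symm
  · exact (map_sub (BG α) _ _).symm
  · rw [sub_sub_sub_comm, LinearMap.map₂_sub_map₂_eq]

/-- Given a non-abelian extension `0 → h → ĝ →p g → 0` of Leibniz algebras
(here `h = ker p`), the non-abelian 2-cocycles induced by two splittings
`σ₁, σ₂` are equivalent via `φ(x) = σ₁(x) - σ₂(x)`: `φ` takes values in `h`,
`l¹_x - l²_x = ad^L_{φ(x)}`, `r¹_x - r²_x = ad^R_{φ(x)}`, and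
`ω¹(x,y) - ω²(x,y) = l²_x φ(y) + r²_y φ(x) + [φ(x),φ(y)] - φ([x,y]_g)`,
where `ωʲ(x,y) = [σⱼx, σⱼy] - σⱼ[x,y]_g`, `lʲ_x β = [σⱼx, β]`,
`rʲ_y α = [α, σⱼy]`. -/
theorem cocycle_class_independent_of_splitting
    {K : Type*} [Field K]
    {g : Type*} [AddCommGroup g] [Module K g]
    {G : Type*} [AddCommGroup G] [Module K G]
    (Bg : g →ₗ[K] g →ₗ[K] g)
    (hg : ∀ x y z : g, Bg x (Bg y z) = Bg (Bg x y) z + Bg y (Bg x z))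
    (BG : G →ₗ[K] G →ₗ[K] G)
    (hG : ∀ a b c : G, BG a (BG b c) = BG (BG a b) c + BG b (BG a c))
    (p : G →ₗ[K] g) (hp : Function.Surjective ⇑p)
    (hphom : ∀ a b : G, p (BG a b) = Bg (p a) (p b))
    (σ₁ σ₂ : g →ₗ[K] G)
    (hσ₁ : ∀ x : g, p (σ₁ x) = x) (hσ₂ : ∀ x : g, p (σ₂ x) = x) :
    (∀ x : g, σ₁ x - σ₂ x ∈ LinearMap.ker p) ∧
    (∀ (x : g) (β : G), β ∈ LinearMap.ker p →
        BG (σ₁ x) β - BG (σ₂ x) β = BG (σ₁ x - σ₂ x) β) ∧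
    (∀ (x : g) (α : G), α ∈ LinearMap.ker p →
        BG α (σ₁ x) - BG α (σ₂ x) = BG α (σ₁ x - σ₂ x)) ∧
    (∀ x y : g,
        (BG (σ₁ x) (σ₁ y) - σ₁ (Bg x y)) - (BG (σ₂ x) (σ₂ y) - σ₂ (Bg x y)) =
          BG (σ₂ x) (σ₁ y - σ₂ y) + BG (σ₁ x - σ₂ x) (σ₂ y) +
            BG (σ₁ x - σ₂ x) (σ₁ y - σ₂ y) -
              (σ₁ (Bg x y) - σ₂ (Bg x y))) :=
  cocycle_class_independent_of_splitting_general Bg BG p σ₁ σ₂ hσ₁ hσ₂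
end
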